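/- Let N be a tree-child time consistent hybridization network, let i be a hybrid leaf, let v be a parent of i, and let s be a tree descendant leaf of v. Then v = [i,s], i.e., v is the least common semi-strict ancestor of i and s; in particular ℓ_N(i,s) = 1. -/

import Mathlib

open Classical

/-- A walk (path) in a digraph: a nonempty list of vertices with consecutive arcs. -/
def IsWalk {V : Type} (E : V → V → Prop) (p : List V) : Prop := p ≠ [] ∧ p.Chain' E

/-- A path with origin `u` and end `v`. -/
def WalkFromTo {V : Type} (E : V → V → Prop) (u v : V) (p : List V) : Prop :=
  IsWalk E p ∧ p.head? = some u ∧ p.getLast? = some v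

/-- `v` is a descendant of `u` (possibly trivial path from `u` to `v`). -/
def Desc {V : Type} (E : V → V → Prop) (u v : V) : Prop := Relation.ReflTransGen E u v

/-- A root: a node with no incoming arcs. -/
def IsRootNode {V : Type} (E : V → V → Prop) (r : V) : Prop := ∀ u, ¬ E u r

/-- `u` is a strict ancestor of `v`: `v` is a descendant of `u` and every path
from a root to `v` contains `u`. -/
def StrictAnc {V : Type} (E : V → V → Prop) (u v : V) : Prop :=
  Desc E u v ∧ ∀ (r : V) (p : List V), IsRootNode E r → WalkFromTo E r v p → u ∈ p

/-- In-degree. -/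
noncomputable def indeg {V : Type} (E : V → V → Prop) (v : V) : ℕ := {u | E u v}.ncard
/-- Out-degree. -/
noncomputable def outdeg {V : Type} (E : V → V → Prop) (v : V) : ℕ := {w | E v w}.ncard

/-- Tree node: in-degree at most 1. -/
def IsTreeNode {V : Type} (E : V → V → Prop) (v : V) : Prop := indeg E v ≤ 1
/-- Hybrid node: in-degree at least 2. -/
def IsHybrid {V : Type} (E : V → V → Prop) (v : V) : Prop := 2 ≤ indeg E v
/-- Leaf: no outgoing arcs. -/
def IsLeaf {V : Type} (E : V → V → Prop) (v : V) : Prop := ∀ w, ¬ E v w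

/-- Acyclicity: no non-trivial path from a node to itself. -/
def Acyclic {V : Type} (E : V → V → Prop) : Prop := ∀ v, ¬ Relation.TransGen E v v

/-- A hybridization network: a rooted DAG whose single root has out-degree > 1. -/
structure IsHybNet {V : Type} (E : V → V → Prop) (r : V) : Prop where
  acyclic : Acyclic E
  isRoot : IsRootNode E r
  uniqueRoot : ∀ x, IsRootNode E x → x = r
  rootOut : 2 ≤ outdeg E r

/-- Tree-child condition: every internal node has a tree-node child. -/
def TreeChild {V : Type} (E : V → V → Prop) : Prop :=
  ∀ v, ¬ IsLeaf E v → ∃ w, E v w ∧ IsTreeNode E w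

/-- Time consistency: a temporal representation exists. -/
def TimeConsistent {V : Type} (E : V → V → Prop) : Prop :=
  ∃ τ : V → ℕ, ∀ u v, E u v → (IsTreeNode E v → τ u < τ v) ∧ (IsHybrid E v → τ u = τ v)

/-- The leaves are bijectively labeled by `S` via `leaf`. -/
def LabelsLeaves {V S : Type} (E : V → V → Prop) (leaf : S → V) : Prop :=
  Function.Injective leaf ∧ (∀ s, IsLeaf E (leaf s)) ∧ ∀ v, IsLeaf E v → ∃ s, leaf s = v

/-- Distance: length of a shortest path from `u` to `v`. -/
noncomputable def dist {V : Type} (E : V → V → Prop) (u v : V) : ℕ :=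
  sInf {n | ∃ p, WalkFromTo E u v p ∧ p.length = n + 1}

/-- Height: largest length of a path from `v` to a leaf. -/
noncomputable def height {V : Type} (E : V → V → Prop) (v : V) : ℕ :=
  sSup {n | ∃ p w, WalkFromTo E v w p ∧ IsLeaf E w ∧ p.length = n + 1}

/-- Common ancestors of `u` and `v` that are strict ancestors of at least one of them. -/
def CSAset {V : Type} (E : V → V → Prop) (u v : V) : Set V :=
  {x | Desc E x u ∧ Desc E x v ∧ (StrictAnc E x u ∨ StrictAnc E x v)}

/-- `x` is a least common semi-strict ancestor of `u` and `v`. -/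
def IsLCSA {V : Type} (E : V → V → Prop) (u v x : V) : Prop :=
  x ∈ CSAset E u v ∧ ∀ y ∈ CSAset E u v, height E x ≤ height E y

/-- The least common semi-strict ancestor `[u,v]` (the root `r` witnesses nonemptiness). -/
noncomputable def lcsa {V : Type} (E : V → V → Prop) (r u v : V) : V :=
  @Classical.epsilon V ⟨r⟩ (IsLCSA E u v)

/-- `ℓ_N(u,v)`: the distance from `[u,v]` to `u`. -/
noncomputable def ell {V : Type} (E : V → V → Prop) (r u v : V) : ℕ :=
  dist E (lcsa E r u v) u

/-- `L_N(u,v) = ℓ_N(u,v) + ℓ_N(v,u)`: the LCSA-path length between `u` and `v`. -/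
noncomputable def pathLen {V : Type} (E : V → V → Prop) (r u v : V) : ℕ :=
  ell E r u v + ell E r v u

/-- `h_N(u,v)`: −1 if `[u,v]` is a strict ancestor of `u` only, 1 if of `v` only, 0 if of both. -/
noncomputable def hval {V : Type} (E : V → V → Prop) (r u v : V) : ℤ :=
  if StrictAnc E (lcsa E r u v) u then
    (if StrictAnc E (lcsa E r u v) v then 0 else -1)
  else 1

/-- Siblings: distinct nodes sharing a parent. -/
def Sibling {V : Type} (E : V → V → Prop) (u v : V) : Prop :=
  u ≠ v ∧ ∃ p, E p u ∧ E p v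

/-- A tree path: a non-trivial path whose end and intermediate nodes are tree nodes. -/
def TreePath {V : Type} (E : V → V → Prop) (p : List V) (u v : V) : Prop :=
  WalkFromTo E u v p ∧ 2 ≤ p.length ∧ ∀ w ∈ p.tail, IsTreeNode E w

/-- `v` is a tree descendant of `u`. -/
def TreeDesc {V : Type} (E : V → V → Prop) (u v : V) : Prop := ∃ p, TreePath E p u v

/-- Quasi-binary hybridization network. -/
def QuasiBinary {V : Type} (E : V → V → Prop) : Prop :=
  ∀ v : V, (indeg E v, outdeg E v) ∈ ({(0,2),(1,0),(1,2),(2,0),(2,1),(2,2)} : Set (ℕ × ℕ))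

/-- Fully resolved hybridization network node types. -/
def FullyResolvedHyb {V : Type} (E : V → V → Prop) : Prop :=
  ∀ v : V, (indeg E v, outdeg E v) ∈ ({(0,2),(1,0),(1,2),(2,0),(2,2)} : Set (ℕ × ℕ))

/-- Fully resolved phylogenetic network node types. -/
def FullyResolvedPhylo {V : Type} (E : V → V → Prop) : Prop :=
  ∀ v : V, (indeg E v, outdeg E v) ∈ ({(0,2),(1,0),(1,2),(2,1)} : Set (ℕ × ℕ))

/-- Phylogenetic network condition: every hybrid node has exactly one child, a tree node. -/
def PhyloNet {V : Type} (E : V → V → Prop) : Prop :=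
  ∀ v, IsHybrid E v → ∃ w, E v w ∧ IsTreeNode E w ∧ ∀ x, E v x → x = w

/-!
Every path from the root to `s` must run through the whole tree path from `v` to `s`, since each
tree node on it has only one parent; so `v` is a strict ancestor of `s`, and it is a common
ancestor of `i` and `s`. Conversely, a common ancestor `y` of `i` and `s` that is a strict
ancestor of one of them lies on the root path to `v` followed by the arc `v → i` or by the tree
path to `s`. It cannot be `i` itself (`i` is a leaf different from the tree node `s`), and it
cannot be on the tree path: along it a temporal representation `τ` increases strictly beyond
`τ v`, whereas ancestors of the hybrid `i` have time at most `τ i = τ v`. Hence `y` is an ancestor of `v` and has height at least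
that of `v`.
-/

theorem List.IsChain.exists_rel_of_mem_tail {α : Type*} {R : α → α → Prop} {y : α} :
    ∀ {l : List α}, l.IsChain R → y ∈ l.tail → ∃ z ∈ l, R z y
  | [], _, hy => by simp at hy
  | [_], _, hy => by simp at hy
  | a :: b :: t, h, hy => by
    rw [List.isChain_cons_cons] at h
    rcases List.mem_cons.mp hy with rfl | hy
    · exact ⟨a, List.mem_cons_self, h.1⟩
    · obtain ⟨z, hz, hzy⟩ := h.2.exists_rel_of_mem_tail hy
      exact ⟨z, List.mem_cons_of_mem _ hz, hzy⟩

namespace WalkFromTo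

variable {V : Type} {E : V → V → Prop} {u v w y : V} {p q : List V}

theorem ne_nil (hp : WalkFromTo E u v p) : p ≠ [] := hp.1.1

theorem isChain (hp : WalkFromTo E u v p) : p.IsChain E := hp.1.2

theorem source_mem (hp : WalkFromTo E u v p) : u ∈ p := List.mem_of_mem_head? hp.2.1

theorem target_mem (hp : WalkFromTo E u v p) : v ∈ p := List.mem_of_mem_getLast? hp.2.2

theorem head_eq (hp : WalkFromTo E u v p) : p.head hp.ne_nil = u :=
  Option.some_injective _ ((List.head?_eq_some_head _).symm.trans hp.2.1)

theorem getLast_eq (hp : WalkFromTo E u v p) : p.getLast hp.ne_nil = v :=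
  Option.some_injective _ ((List.getLast?_eq_some_getLast _).symm.trans hp.2.2)

theorem source_desc (hp : WalkFromTo E u v p) (hy : y ∈ p) : Desc E u y :=
  hp.isChain.induction (Desc E u ·) p (fun _ _ h hd => hd.tail h)
    (fun _ => hp.head_eq ▸ .refl) y hy

theorem desc_target (hp : WalkFromTo E u v p) (hy : y ∈ p) : Desc E y v :=
  hp.isChain.backwards_induction (Desc E · v) p (fun _ _ h hd => hd.head h)
    (fun _ => hp.getLast_eq ▸ .refl) y hy

theorem desc (hp : WalkFromTo E u v p) : Desc E u v := hp.desc_target hp.source_mem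

theorem exists_rel_of_mem (hp : WalkFromTo E u v p) (hy : y ∈ p) (hyu : y ≠ u) :
    ∃ z ∈ p, E z y := by
  obtain ⟨t, rfl⟩ := List.head?_eq_some_iff.mp hp.2.1
  exact hp.isChain.exists_rel_of_mem_tail ((List.mem_cons.mp hy).resolve_left hyu)

theorem append (hp : WalkFromTo E u v p) (hq : WalkFromTo E v w q) :
    WalkFromTo E u w (p ++ q.tail) := by
  obtain ⟨⟨hpne, hpc⟩, hph, hpl⟩ := hp
  obtain ⟨t, rfl⟩ := List.head?_eq_some_iff.mp hq.2.1
  obtain ⟨⟨-, hqc⟩, -, hql⟩ := hq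
  rcases eq_or_ne t [] with rfl | htne
  · obtain rfl : v = w := by simpa using hql
    simpa using ⟨⟨hpne, hpc⟩, hph, hpl⟩
  refine ⟨⟨by simp [hpne], hpc.append hqc.tail ?_⟩, by simp [hph], ?_⟩
  · intro x hx z hz
    obtain rfl : v = x := by simpa [hpl] using hx
    exact (List.isChain_cons.mp hqc).1 z hz
  · rw [List.tail_cons, List.getLast?_append_of_ne_nil _ htne]
    rw [List.getLast?_cons, List.getLast?_eq_some_getLast htne] at hql
    rwa [List.getLast?_eq_some_getLast htne]

theorem of_rel (h : E u v) : WalkFromTo E u v [u, v] :=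
  ⟨⟨by simp, List.isChain_pair.mpr h⟩, rfl, rfl⟩

end WalkFromTo

section Network

variable {V : Type} {E : V → V → Prop}

theorem exists_walkFromTo_of_desc {u v : V} (h : Desc E u v) : ∃ p, WalkFromTo E u v p := by
  obtain ⟨p, hne, hc, hh, hl⟩ := List.exists_isChain_ne_nil_of_relationReflTransGen h
  exact ⟨p, ⟨hne, hc⟩, by simp [List.head?_eq_some_head hne, hh],
    by simp [List.getLast?_eq_some_getLast hne, hl]⟩

theorem Acyclic.ne_of_rel (hac : Acyclic E) {u v : V} (h : E u v) : u ≠ v := by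
  rintro rfl
  exact hac u (.single h)

theorem Acyclic.nodup_of_isChain (hac : Acyclic E) {p : List V} (hp : p.IsChain E) :
    p.Nodup := by
  refine (List.isChain_iff_pairwise.mp (hp.imp fun _ _ => Relation.TransGen.single)).imp ?_
  rintro a _ h rfl
  exact hac a h

theorem Acyclic.wellFounded [Finite V] (hac : Acyclic E) : WellFounded E :=
  have : IsTrans V (Relation.TransGen E) := ⟨fun _ _ _ => .trans⟩
  have : Std.Irrefl (Relation.TransGen E) := ⟨hac⟩
  Subrelation.wf Relation.TransGen.single (Finite.wellFounded_of_trans_of_irrefl _)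

theorem IsHybNet.desc [Finite V] {r : V} (hnet : IsHybNet E r) (x : V) : Desc E r x := by
  induction x using hnet.acyclic.wellFounded.induction with
  | _ x ih =>
    by_cases hx : IsRootNode E x
    · exact hnet.uniqueRoot x hx ▸ .refl
    · obtain ⟨u, hu⟩ : ∃ u, E u x := by simpa [IsRootNode] using hx
      exact (ih u hu).tail hu

theorem IsTreeNode.eq_of_rel [Finite V] {w u u' : V} (hw : IsTreeNode E w) (hu : E u w)
    (hu' : E u' w) : u = u' :=
  (Set.ncard_le_one (Set.toFinite _)).mp hw u hu u' hu'

theorem IsHybrid.not_isTreeNode {x : V} (hx : IsHybrid E x) : ¬ IsTreeNode E x := by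
  unfold IsHybrid at hx
  unfold IsTreeNode
  omega

theorem IsLeaf.eq_of_desc {x y : V} (hx : IsLeaf E x) (h : Desc E x y) : y = x := by
  rcases Relation.ReflTransGen.cases_head h with rfl | ⟨c, hc, -⟩
  · rfl
  · exact absurd hc (hx c)

theorem WalkFromTo.mem_of_rel_of_isTreeNode [Finite V] {r x u w : V} {p : List V}
    (hp : WalkFromTo E r x p) (hr : IsRootNode E r) (hw : w ∈ p) (huw : E u w)
    (htw : IsTreeNode E w) : u ∈ p := by
  obtain ⟨z, hz, hzw⟩ := hp.exists_rel_of_mem hw (by rintro rfl; exact hr u huw)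
  rwa [htw.eq_of_rel huw hzw]

theorem StrictAnc.mem_or_mem_tail {r x y v : V} {p q : List V} (h : StrictAnc E y x)
    (hr : IsRootNode E r) (hp : WalkFromTo E r v p) (hq : WalkFromTo E v x q) :
    y ∈ p ∨ y ∈ q.tail :=
  List.mem_append.mp (h.2 r _ hr (hp.append hq))

namespace TreePath

variable {q : List V} {u s : V}

theorem isTreeNode_target (hq : TreePath E q u s) : IsTreeNode E s := by
  obtain ⟨hw, hlen, htree⟩ := hq
  obtain ⟨a, t, rfl⟩ := List.exists_cons_of_ne_nil hw.ne_nil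
  have htne : t ≠ [] := by rintro rfl; simp at hlen
  refine htree s ?_
  rw [← hw.getLast_eq, List.getLast_cons htne]
  exact List.getLast_mem htne

theorem subset_of_walkFromTo [Finite V] (hq : TreePath E q u s) {r : V} {p : List V}
    (hr : IsRootNode E r) (hp : WalkFromTo E r s p) : q ⊆ p := by
  obtain ⟨hw, -, htree⟩ := hq
  refine (List.IsChain.iff_mem_mem_tail.mp hw.isChain).backwards_induction (· ∈ p) q ?_
    (fun _ => hw.getLast_eq ▸ hp.target_mem)
  rintro x y ⟨-, hy, hxy⟩ hyp
  exact hp.mem_of_rel_of_isTreeNode hr hyp hxy (htree y hy)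

theorem strictAnc [Finite V] (hq : TreePath E q u s) : StrictAnc E u s :=
  ⟨hq.1.desc, fun _ _ hr hp => hq.subset_of_walkFromTo hr hp hq.1.source_mem⟩

end TreePath

def IsTemporal (E : V → V → Prop) (τ : V → ℕ) : Prop :=
  ∀ u v, E u v → (IsTreeNode E v → τ u < τ v) ∧ (IsHybrid E v → τ u = τ v)

namespace IsTemporal

variable {τ : V → ℕ}

theorem le_of_rel (hτ : IsTemporal E τ) {u v : V} (h : E u v) : τ u ≤ τ v := by
  by_cases hv : IsTreeNode E v
  · exact ((hτ u v h).1 hv).le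
  · exact ((hτ u v h).2 (by unfold IsTreeNode at hv; unfold IsHybrid; omega)).le

theorem le_of_desc (hτ : IsTemporal E τ) {u v : V} (h : Desc E u v) : τ u ≤ τ v := by
  induction h with
  | refl => exact le_rfl
  | tail _ h ih => exact ih.trans (hτ.le_of_rel h)

theorem lt_of_mem_tail (hτ : IsTemporal E τ) {q : List V} {u s y : V} (hq : TreePath E q u s)
    (hy : y ∈ q.tail) : τ u < τ y := by
  obtain ⟨z, hz, hzy⟩ := hq.1.isChain.exists_rel_of_mem_tail hy
  calc τ u ≤ τ z := hτ.le_of_desc (hq.1.source_desc hz)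
    _ < τ y := (hτ z y hzy).1 (hq.2.2 y hy)

theorem not_desc_of_mem_tail (hτ : IsTemporal E τ) {q : List V} {v s i y : V}
    (hq : TreePath E q v s) (hvi : E v i) (hi : IsHybrid E i) (hy : y ∈ q.tail) :
    ¬ Desc E y i := fun hyi => by
  have := hτ.lt_of_mem_tail hq hy
  have := hτ.le_of_desc hyi
  have := (hτ v i hvi).2 hi
  omega

end IsTemporal

theorem height_le_of_desc [Finite V] (hac : Acyclic E) {x y : V} (h : Desc E y x) :
    height E x ≤ height E y := by
  have := Fintype.ofFinite V
  have hbdd : BddAbove {n | ∃ p w, WalkFromTo E y w p ∧ IsLeaf E w ∧ p.length = n + 1} :=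
    ⟨Fintype.card V, fun n ⟨p, _, hp, _, hlen⟩ =>
      by have := (hac.nodup_of_isChain hp.isChain).length_le_card; omega⟩
  obtain ⟨q, hq⟩ := exists_walkFromTo_of_desc h
  rcases Set.eq_empty_or_nonempty
      {n | ∃ p w, WalkFromTo E x w p ∧ IsLeaf E w ∧ p.length = n + 1} with he | hne
  · simp only [height, he, csSup_empty, Nat.bot_eq_zero, zero_le]
  have hq0 := List.length_pos_of_ne_nil hq.ne_nil
  refine csSup_le hne fun n ⟨p, w, hp, hw, hlen⟩ => le_csSup_of_le hbdd
    ⟨q ++ p.tail, w, hq.append hp, hw, (Nat.succ_pred_eq_of_pos ?_).symm⟩ ?_ <;>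
  simp only [List.length_append, List.length_tail, Nat.pred_eq_sub_one] <;> omega

theorem dist_eq_one_of_rel {u v : V} (h : E u v) (hne : u ≠ v) : dist E u v = 1 := by
  refine le_antisymm (Nat.sInf_le ⟨[u, v], .of_rel h, rfl⟩)
    (le_csInf ⟨1, [u, v], .of_rel h, rfl⟩ ?_)
  rintro n ⟨p, hp, hlen⟩
  by_contra! hn
  obtain ⟨a, rfl⟩ := List.length_eq_one_iff.mp (show p.length = 1 by omega)
  exact hne (by simpa using hp.2.1.symm.trans hp.2.2)

theorem desc_of_mem_CSAset [Finite V] {r i v s y : V} {q : List V} {τ : V → ℕ}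
    (hnet : IsHybNet E r) (hτ : IsTemporal E τ) (hi : IsLeaf E i) (hhyb : IsHybrid E i)
    (hvi : E v i) (hq : TreePath E q v s) (hy : y ∈ CSAset E i s) : Desc E y v := by
  obtain ⟨hyi, hys, hstrict⟩ := hy
  obtain ⟨p, hp⟩ := exists_walkFromTo_of_desc (hnet.desc v)
  have hmem : y ∈ p ∨ y = i ∨ y ∈ q.tail := by
    rcases hstrict with h | h
    · simpa using (h.mem_or_mem_tail hnet.isRoot hp (.of_rel hvi)).imp_right Or.inl
    · exact (h.mem_or_mem_tail hnet.isRoot hp hq.1).imp_right Or.inr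
  rcases hmem with hy | rfl | hy
  · exact hp.desc_target hy
  · exact absurd (hi.eq_of_desc hys ▸ hq.isTreeNode_target) hhyb.not_isTreeNode
  · exact absurd hyi (hτ.not_desc_of_mem_tail hq hvi hhyb hy)

end Network

theorem stmt19_general {V : Type} [Fintype V] (E : V → V → Prop) (r : V)
    (hnet : IsHybNet E r) (hti : TimeConsistent E)
    (i v s : V) (hi : IsLeaf E i) (hhyb : IsHybrid E i) (hvi : E v i)
    (hts : TreeDesc E v s) :
    IsLCSA E i s v ∧ dist E v i = 1 := by
  obtain ⟨τ, hτ⟩ := hti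
  obtain ⟨q, hq⟩ := hts
  have hv : v ∈ CSAset E i s := ⟨.single hvi, hq.1.desc, Or.inr hq.strictAnc⟩
  have hanc : ∀ y ∈ CSAset E i s, Desc E y v := fun y hy =>
    desc_of_mem_CSAset hnet hτ hi hhyb hvi hq hy
  exact ⟨⟨hv, fun y hy => height_le_of_desc hnet.acyclic (hanc y hy)⟩,
    dist_eq_one_of_rel hvi (hnet.acyclic.ne_of_rel hvi)⟩

/-- In a TCTC hybridization network, if `i` is a hybrid leaf, `v` a parent
of `i`, and `s` a tree descendant leaf of `v`, then `v = [i,s]` and `ℓ_N(i,s) = 1`. -/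
theorem stmt19 {V : Type} [Fintype V] (E : V → V → Prop) (r : V)
    (hnet : IsHybNet E r) (htc : TreeChild E) (hti : TimeConsistent E)
    (i v s : V) (hi : IsLeaf E i) (hhyb : IsHybrid E i) (hvi : E v i)
    (hs : IsLeaf E s) (hts : TreeDesc E v s) :
    IsLCSA E i s v ∧ dist E v i = 1 :=
  stmt19_general E r hnet hti i v s hi hhyb hvi hts
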